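/- arXiv:2306.14381 — 6 statements merged into one kernel-verified Lean document; each statement's English description precedes it below -/
import Mathlib

section
/- Let w(t) = σ(t)(1-σ(t)) where σ is the sigmoid function. For any real numbers t, t' with |t' - t| ≤ 1/2, it holds that (1/2)·w(t) ≤ w(t') ≤ 2·w(t). -/
open Real

lemma exp_half_le_two : Real.exp (1/2) ≤ 2 := by
  nlinarith [Real.exp_one_lt_d9, Real.exp_pos (1/2), Real.exp_pos 1,
    (by rw [← Real.exp_add]; norm_num : Real.exp (1/2) * Real.exp (1/2) = Real.exp 1)]

lemma key (u s : ℝ) (hu : 0 < u) (hs : |s| ≤ 1/2) :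
    Real.exp s * (1 + u)^2 ≤ 2 * (1 + u * Real.exp s)^2 := by
  obtain ⟨h1, h2⟩ := abs_le.mp hs
  have hE : (0:ℝ) < Real.exp s := Real.exp_pos s
  have hE2 : Real.exp s ≤ 2 :=
    le_trans (Real.exp_le_exp.mpr h2) exp_half_le_two
  have hE1 : 1/2 ≤ Real.exp s := by
    have h3 : (Real.exp s)⁻¹ ≤ Real.exp (1/2) := by
      rw [← Real.exp_neg]; exact Real.exp_le_exp.mpr (by linarith)
    have h4 : Real.exp s * (Real.exp s)⁻¹ = 1 := mul_inv_cancel₀ hE.ne'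
    nlinarith [exp_half_le_two]
  nlinarith [sq_nonneg u, mul_nonneg (sq_nonneg u) hE.le, mul_nonneg hu.le hE.le]

lemma w_ratio (σ : ℝ → ℝ) (hσ : ∀ t, σ t = 1 / (1 + exp (-t)))
    (w : ℝ → ℝ) (hw : ∀ t, w t = σ t * (1 - σ t))
    (t t' : ℝ) (h : |t' - t| ≤ 1 / 2) : w t' ≤ 2 * w t := by
  have hx : (0:ℝ) < exp (-t) := Real.exp_pos _
  have hwx : ∀ u, w u = exp (-u) / (1 + exp (-u))^2 := by
    intro u
    have hpos : (0:ℝ) < 1 + exp (-u) := by positivity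
    rw [hw, hσ]
    field_simp
    ring
  have h' : |t - t'| ≤ 1/2 := by rw [abs_sub_comm]; exact h
  have hk := key (exp (-t)) (t - t') hx h'
  have hyx : exp (-t') = exp (-t) * exp (t - t') := by
    rw [← Real.exp_add]; ring_nf
  have hxp : (0:ℝ) < (1 + exp (-t))^2 := by positivity
  have hyp : (0:ℝ) < (1 + exp (-t'))^2 := by positivity
  rw [hwx, hwx]
  rw [show 2 * (exp (-t) / (1 + exp (-t))^2) = (2 * exp (-t)) / (1 + exp (-t))^2 by ring,
    div_le_div_iff₀ hyp hxp]
  have := mul_le_mul_of_nonneg_left hk hx.le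
  calc exp (-t') * (1 + exp (-t))^2
      = exp (-t) * (exp (t - t') * (1 + exp (-t))^2) := by rw [hyx]; ring
    _ ≤ exp (-t) * (2 * (1 + exp (-t) * exp (t - t'))^2) := this
    _ = 2 * exp (-t) * (1 + exp (-t'))^2 := by rw [← hyx]; ring

/-- If |t' - t| ≤ 1/2 then w(t') is within a factor of 2 of w(t),
where w(t) = σ(t)(1-σ(t)) and σ is the sigmoid. -/
theorem sigmoid_w_stable
    (σ : ℝ → ℝ) (hσ : ∀ t, σ t = 1 / (1 + exp (-t)))
    (w : ℝ → ℝ) (hw : ∀ t, w t = σ t * (1 - σ t))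
    (t t' : ℝ) (h : |t' - t| ≤ 1 / 2) :
    (1 / 2) * w t ≤ w t' ∧ w t' ≤ 2 * w t := by
  have h' : |t - t'| ≤ 1/2 := by rw [abs_sub_comm]; exact h
  constructor
  · have := w_ratio σ hσ w hw t' t h'
    linarith
  · exact w_ratio σ hσ w hw t t' h
end

section
/- Let f(x) = Σ_{i=1}^m log(1+exp(-(Ax)_i)) where all entries of A are bounded by M in absolute value. Then for all x, ỹ ∈ ℝ^n, ỹᵀ ∇²f(x) ỹ ≤ M² · f(x) · ‖ỹ‖₁², i.e., f is M²-multiplicatively smooth with respect to the ℓ₁ norm. -/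
/-!
Since `ỹᵀ ∇²f(x) ỹ = Σᵢ w((Ax)ᵢ) (Aỹ)ᵢ²`, it suffices to bound the two factors termwise.
Writing `s = σ(t)`, the weight is `s (1 - s) ≤ 1 - s ≤ -log s = log (1 + exp (-t))`, so each
weight is bounded by the corresponding summand of the loss; and since every entry of `A` is
bounded by `M`, each `(Aỹ)ᵢ²` is at most `M² ‖ỹ‖₁²`.
-/

open Real

theorem Matrix.abs_mulVec_apply_le {R ι κ : Type*} [Ring R] [LinearOrder R]
    [IsStrictOrderedRing R] [Fintype κ] (A : Matrix ι κ R) {M : R} (hA : ∀ i j, |A i j| ≤ M)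
    (y : κ → R) (i : ι) : |A.mulVec y i| ≤ M * ∑ j, |y j| :=
  calc |A.mulVec y i| = |∑ j, A i j * y j| := rfl
    _ ≤ ∑ j, |A i j| * |y j| := by
      simpa only [abs_mul] using Finset.abs_sum_le_sum_abs (fun j => A i j * y j) Finset.univ
    _ ≤ ∑ j, M * |y j| := by gcongr with j; exact hA i j
    _ = M * ∑ j, |y j| := (Finset.mul_sum _ _ _).symm

theorem Real.mul_one_sub_le_neg_log {s : ℝ} (hs : 0 < s) : s * (1 - s) ≤ -log s := by
  nlinarith [sq_nonneg (1 - s), log_le_sub_one_of_pos hs]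

theorem Real.logistic_mul_one_sub_le_log_one_add_exp_neg (t : ℝ) :
    1 / (1 + exp (-t)) * (1 - 1 / (1 + exp (-t))) ≤ log (1 + exp (-t)) := by
  simpa only [one_div, log_inv, neg_neg] using
    mul_one_sub_le_neg_log (by positivity : 0 < 1 / (1 + exp (-t)))

/-- Multiplicative smoothness of the logistic loss w.r.t. the ℓ₁ norm:
ỹᵀ ∇²f(x) ỹ = Σᵢ w((Ax)ᵢ)(Aỹ)ᵢ² ≤ M² f(x) ‖ỹ‖₁². -/
theorem logistic_multiplicative_smoothness
    {m n : ℕ} (A : Matrix (Fin m) (Fin n) ℝ) (M : ℝ)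
    (hA : ∀ i j, |A i j| ≤ M)
    (σ : ℝ → ℝ) (hσ : ∀ t, σ t = 1 / (1 + exp (-t)))
    (w : ℝ → ℝ) (hw : ∀ t, w t = σ t * (1 - σ t))
    (f : (Fin n → ℝ) → ℝ)
    (hf : ∀ x, f x = ∑ i, log (1 + exp (-(A.mulVec x i))))
    (x y : Fin n → ℝ) :
    ∑ i, w (A.mulVec x i) * (A.mulVec y i) ^ 2 ≤ M ^ 2 * f x * (∑ j, |y j|) ^ 2 := by
  have hweight (t : ℝ) : w t ≤ log (1 + exp (-t)) := by
    rw [hw, hσ]; exact logistic_mul_one_sub_le_log_one_add_exp_neg t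
  have hloss_nonneg (t : ℝ) : 0 ≤ log (1 + exp (-t)) :=
    log_nonneg (le_add_of_nonneg_right (exp_nonneg _))
  have hsq (i : Fin m) : A.mulVec y i ^ 2 ≤ (M * ∑ j, |y j|) ^ 2 := by
    rw [← sq_abs]
    exact pow_le_pow_left₀ (abs_nonneg _) (A.abs_mulVec_apply_le hA y i) 2
  calc ∑ i, w (A.mulVec x i) * A.mulVec y i ^ 2
      ≤ ∑ i, log (1 + exp (-A.mulVec x i)) * (M * ∑ j, |y j|) ^ 2 :=
        Finset.sum_le_sum fun i _ =>
          mul_le_mul (hweight _) (hsq i) (sq_nonneg _) (hloss_nonneg _)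
    _ = M ^ 2 * f x * (∑ j, |y j|) ^ 2 := by rw [← Finset.sum_mul, ← hf]; ring
end

section
/- Let f : ℝ^n → ℝ be differentiable and convex, x ∈ [-B',B']^n and x* ∈ [-B,B]^n with B' ≥ B > 0. Let F = {i : |x_i| < B or ∇_i f(x)·x_i ≥ 0} and S = supp(x). Then ‖∇_F f(x)‖_∞ · ‖x*‖₁ + ‖∇_{S∩F} f(x)‖_∞ · ‖x‖₁ ≥ f(x) - f(x*). -/
/-!
Convexity gives `f x - f x* ≤ ∇f(x)·(x - x*) = ∑ᵢ (xᵢ - x*ᵢ) ∂ᵢf(x)`. For `i ∈ F` the summand is at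
most `|∂ᵢf(x)| (|x*ᵢ| + |xᵢ|)`, and `|xᵢ|` vanishes unless `i ∈ S`. For `i ∉ F` the summand is
nonpositive: `∂ᵢf(x)` has the sign opposite to `xᵢ`, while `|x*ᵢ| ≤ B ≤ |xᵢ|`, so `xᵢ - x*ᵢ` has
the sign of `xᵢ`.
-/

theorem ConvexOn.add_fderiv_sub_le {E : Type*} [NormedAddCommGroup E] [NormedSpace ℝ E]
    {s : Set E} {f : E → ℝ} (hf : ConvexOn ℝ s f) {x y : E} (hx : x ∈ s) (hy : y ∈ s)
    (hfx : DifferentiableAt ℝ f x) :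
    f x + fderiv ℝ f x (y - x) ≤ f y := by
  set line : ℝ →ᵃ[ℝ] E := AffineMap.lineMap x y
  have hline : ConvexOn ℝ (line ⁻¹' s) (f ∘ line) := hf.comp_affineMap line
  have hderiv : HasDerivAt (f ∘ line) (fderiv ℝ f x (y - x)) 0 :=
    hfx.hasFDerivAt.comp_hasDerivAt_of_eq 0 AffineMap.hasDerivAt_lineMap
      (AffineMap.lineMap_apply_zero x y).symm
  have hslope := hline.le_slope_of_hasDerivAt (by simpa [line] using hx)
    (by simpa [line] using hy) one_pos hderiv
  simp only [slope, line, Function.comp_apply, AffineMap.lineMap_apply_zero,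
    AffineMap.lineMap_apply_one, sub_zero, inv_one, one_smul, vsub_eq_sub] at hslope
  linarith

theorem ContinuousLinearMap.apply_eq_sum_mul_single {R ι : Type*} [Semiring R]
    [TopologicalSpace R] [Fintype ι] [DecidableEq ι] (L : (ι → R) →L[R] R) (v : ι → R) :
    L v = ∑ i, v i * L (Pi.single i 1) := by
  conv_lhs => rw [pi_eq_sum_univ' v]
  simp [map_sum]

theorem sub_mul_nonpos_of_abs_le_abs {a b d : ℝ} (hba : |b| ≤ |a|) (hda : d * a < 0) :
    (a - b) * d ≤ 0 := by
  have hsign : d * a = -(|d| * |a|) := by rw [← abs_mul, abs_of_neg hda, neg_neg]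
  have hb : -(b * d) ≤ |d| * |b| := by rw [mul_comm |d|, ← abs_mul]; exact neg_le_abs _
  nlinarith [abs_nonneg d]

theorem sub_mul_le_mul_abs_add_mul_abs {a b d A B C : ℝ} (hb : |b| ≤ B) (hA : 0 ≤ A)
    (hC : 0 ≤ C) (hdA : |a| < B ∨ 0 ≤ d * a → |d| ≤ A)
    (hdC : a ≠ 0 ∧ (|a| < B ∨ 0 ≤ d * a) → |d| ≤ C) :
    (a - b) * d ≤ A * |b| + C * |a| := by
  by_cases hF : |a| < B ∨ 0 ≤ d * a
  · have hCa : |d| * |a| ≤ C * |a| := by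
      rcases eq_or_ne a 0 with rfl | ha
      · simp
      · exact mul_le_mul_of_nonneg_right (hdC ⟨ha, hF⟩) (abs_nonneg a)
    calc (a - b) * d ≤ |a - b| * |d| := by rw [← abs_mul]; exact le_abs_self _
      _ ≤ (|a| + |b|) * |d| := by gcongr; exact abs_sub _ _
      _ ≤ A * |b| + C * |a| := by
        nlinarith [mul_le_mul_of_nonneg_right (hdA hF) (abs_nonneg b)]
  · push Not at hF
    exact (sub_mul_nonpos_of_abs_le_abs (hb.trans hF.1) hF.2).trans (by positivity)

theorem gradient_lower_bound_general
    {n : ℕ} (f : (Fin n → ℝ) → ℝ)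
    (hdiff : Differentiable ℝ f) (hconv : ConvexOn ℝ Set.univ f)
    (B : ℝ)
    (x xs : Fin n → ℝ)
    (hxs : ∀ i, |xs i| ≤ B)
    (D : Fin n → ℝ) (hD : ∀ i, D i = fderiv ℝ f x (Pi.single i 1)) :
    (⨆ i : {i : Fin n // |x i| < B ∨ 0 ≤ D i * x i}, |D i.1|) * (∑ i, |xs i|) +
      (⨆ i : {i : Fin n // x i ≠ 0 ∧ (|x i| < B ∨ 0 ≤ D i * x i)}, |D i.1|) *
        (∑ i, |x i|)
      ≥ f x - f xs := by
  set A := ⨆ i : {i : Fin n // |x i| < B ∨ 0 ≤ D i * x i}, |D i.1|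
  set C := ⨆ i : {i : Fin n // x i ≠ 0 ∧ (|x i| < B ∨ 0 ≤ D i * x i)}, |D i.1|
  have hA : 0 ≤ A := Real.iSup_nonneg fun _ ↦ abs_nonneg _
  have hC : 0 ≤ C := Real.iSup_nonneg fun _ ↦ abs_nonneg _
  have hle (p : Fin n → Prop) (i : Fin n) (hi : p i) : |D i| ≤ ⨆ j : {i // p i}, |D j.1| :=
    le_ciSup (f := fun j : {i // p i} ↦ |D j.1|) (Finite.bddAbove_range _) ⟨i, hi⟩
  have hgrad := hconv.add_fderiv_sub_le (Set.mem_univ x) (Set.mem_univ xs) (hdiff x)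
  rw [ge_iff_le]
  calc f x - f xs ≤ fderiv ℝ f x (x - xs) := by rw [← neg_sub xs x, map_neg]; linarith
    _ = ∑ i, (x i - xs i) * D i := by
      simp only [ContinuousLinearMap.apply_eq_sum_mul_single _ (x - xs), hD, Pi.sub_apply]
    _ ≤ ∑ i, (A * |xs i| + C * |x i|) := Finset.sum_le_sum fun i _ ↦
      sub_mul_le_mul_abs_add_mul_abs (hxs i) hA hC (fun hi ↦ hle _ i hi) (fun hi ↦ hle _ i hi)
    _ = A * ∑ i, |xs i| + C * ∑ i, |x i| := by
      rw [Finset.sum_add_distrib, Finset.mul_sum, Finset.mul_sum]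

/-- Gradient lower bound over the sets F = {i : |xᵢ| < B or ∇ᵢf(x)·xᵢ ≥ 0} and
S = supp(x): ‖∇_F f(x)‖_∞ ‖x*‖₁ + ‖∇_{S∩F} f(x)‖_∞ ‖x‖₁ ≥ f(x) - f(x*). -/
theorem gradient_lower_bound
    {n : ℕ} (f : (Fin n → ℝ) → ℝ)
    (hdiff : Differentiable ℝ f) (hconv : ConvexOn ℝ Set.univ f)
    (B B' : ℝ) (hB : 0 < B) (hBB' : B ≤ B')
    (x xs : Fin n → ℝ)
    (hx : ∀ i, |x i| ≤ B') (hxs : ∀ i, |xs i| ≤ B)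
    (D : Fin n → ℝ) (hD : ∀ i, D i = fderiv ℝ f x (Pi.single i 1)) :
    (⨆ i : {i : Fin n // |x i| < B ∨ 0 ≤ D i * x i}, |D i.1|) * (∑ i, |xs i|) +
      (⨆ i : {i : Fin n // x i ≠ 0 ∧ (|x i| < B ∨ 0 ≤ D i * x i)}, |D i.1|) *
        (∑ i, |x i|)
      ≥ f x - f xs :=
  gradient_lower_bound_general f hdiff hconv B x xs hxs D hD
end

section
/- Let f : ℝ^n → ℝ be differentiable convex, x ∈ [-B',B']^n, x* ∈ [-B,B]^n with B' ≥ B > 0, and 0 < λ ≤ 1. Define ζ_i = λ if x_i = 0, ζ_i = 0 if |x_i| ≥ B and ∇_i f(x)·x_i < 0, and ζ_i = 1 otherwise; let i* maximize ζ_i|∇_i f(x)|. Then either |∇_{i*} f(x)| ≥ (f(x)-f(x*))/(‖x*‖₁ + λ‖x‖₁), or x_{i*} ≠ 0 and |∇_{i*} f(x)| ≥ (f(x)-f(x*))/(λ^{-1}‖x*‖₁ + ‖x‖₁). -/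
open Real

lemma pi_decomp {n : ℕ} (v : Fin n → ℝ) :
    v = ∑ i, v i • (Pi.single i 1 : Fin n → ℝ) := by
  funext j
  simp [Finset.sum_apply, Pi.single_apply]

lemma convex_grad_ineq {n : ℕ} (f : (Fin n → ℝ) → ℝ)
    (hdiff : Differentiable ℝ f) (hconv : ConvexOn ℝ Set.univ f)
    (x xs : Fin n → ℝ) (hne : xs ≠ x) :
    f x - f xs ≤ fderiv ℝ f x (x - xs) := by
  set c := AffineMap.lineMap (k := ℝ) xs x with hc
  have hcomp : ConvexOn ℝ Set.univ (f ∘ c) := by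
    have := hconv.comp_affineMap c
    simpa using this
  have hderiv : HasDerivAt (f ∘ c) (fderiv ℝ f (c 1) (x - xs)) 1 :=
    (hdiff (c 1)).hasFDerivAt.comp_hasDerivAt 1 (AffineMap.hasDerivAt_lineMap)
  have hslope := hcomp.slope_le_of_hasDerivAt (Set.mem_univ 0) (Set.mem_univ 1)
    one_pos hderiv
  have h0 : (f ∘ c) 0 = f xs := by simp [hc]
  have h1 : (f ∘ c) 1 = f x := by simp [hc]
  rw [slope_def_field, h0, h1] at hslope
  have hc1 : c 1 = x := by simp [hc]
  rw [hc1] at hslope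
  calc f x - f xs = (f x - f xs) / (1 - 0) := by norm_num
    _ ≤ _ := hslope

/-- Gradient lower bound for the greedy coordinate chosen with the
sparsity-discounting weights ζ: either the selected coordinate has large
gradient relative to ‖x*‖₁ + λ‖x‖₁, or it lies in the support of x and has
large gradient relative to λ⁻¹‖x*‖₁ + ‖x‖₁. -/
theorem greedy_coordinate_gradient_lower_bound
    {n : ℕ} (f : (Fin n → ℝ) → ℝ)
    (hdiff : Differentiable ℝ f) (hconv : ConvexOn ℝ Set.univ f)
    (B B' lam : ℝ) (hB : 0 < B) (hBB' : B ≤ B') (hlam0 : 0 < lam) (hlam1 : lam ≤ 1)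
    (x xs : Fin n → ℝ)
    (hx : ∀ i, |x i| ≤ B') (hxs : ∀ i, |xs i| ≤ B)
    (D : Fin n → ℝ) (hD : ∀ i, D i = fderiv ℝ f x (Pi.single i 1))
    (ζ : Fin n → ℝ)
    (hζ : ∀ i, ζ i = if x i = 0 then lam
                     else if B ≤ |x i| ∧ D i * x i < 0 then 0 else 1)
    (istar : Fin n) (histar : ∀ i, ζ i * |D i| ≤ ζ istar * |D istar|) :
    |D istar| ≥ (f x - f xs) / ((∑ i, |xs i|) + lam * ∑ i, |x i|) ∨
      (x istar ≠ 0 ∧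
        |D istar| ≥ (f x - f xs) / (lam⁻¹ * (∑ i, |xs i|) + ∑ i, |x i|)) := by
  set S : ℝ := ∑ i, |x i| with hS
  set Ss : ℝ := ∑ i, |xs i| with hSs
  set M : ℝ := ζ istar * |D istar| with hM
  set g : ℝ := f x - f xs with hg
  have hSnn : 0 ≤ S := Finset.sum_nonneg fun i _ => abs_nonneg _
  have hSsnn : 0 ≤ Ss := Finset.sum_nonneg fun i _ => abs_nonneg _
  have hlaminv : (1 : ℝ) ≤ lam⁻¹ := (one_le_inv_iff₀).mpr ⟨hlam0, hlam1⟩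
  have hζnn : ∀ i, 0 ≤ ζ i := by
    intro i
    rw [hζ i]
    split_ifs <;> [exact hlam0.le; exact le_refl 0; exact zero_le_one]
  have hMnn : 0 ≤ M := mul_nonneg (hζnn istar) (abs_nonneg _)
  have hden1 : 0 ≤ Ss + lam * S := by positivity
  have hden2 : 0 ≤ lam⁻¹ * Ss + S := by positivity
  -- trivial case g ≤ 0
  by_cases hg0 : g ≤ 0
  · left
    calc g / (Ss + lam * S) ≤ 0 := div_nonpos_iff.mpr (Or.inr ⟨hg0, hden1⟩)
      _ ≤ |D istar| := abs_nonneg _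
  push_neg at hg0
  -- convexity: g ≤ ∑ D i (x i - xs i)
  have hgrad : g ≤ ∑ i, D i * (x i - xs i) := by
    have hne : xs ≠ x := by
      intro h
      rw [hg, h] at hg0
      simp at hg0
    have h1 := convex_grad_ineq f hdiff hconv x xs hne
    have h2 : fderiv ℝ f x (x - xs) = ∑ i, D i * (x i - xs i) := by
      conv_lhs => rw [pi_decomp (x - xs)]
      rw [map_sum]
      refine Finset.sum_congr rfl fun i _ => ?_
      rw [map_smul, smul_eq_mul, hD i, Pi.sub_apply]
      ring
    rw [← h2]
    exact h1
  -- per-coordinate bound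
  have hterm : ∀ i ∈ Finset.univ, D i * (x i - xs i) ≤ M * (lam⁻¹ * |xs i| + |x i|) := by
    intro i _
    have hζi := hζ i
    have hh := histar i
    by_cases h0 : x i = 0
    · rw [if_pos h0] at hζi
      have : D i * (x i - xs i) = -(D i * xs i) := by rw [h0]; ring
      rw [this]
      have h1 : -(D i * xs i) ≤ |D i| * |xs i| := by
        calc -(D i * xs i) ≤ |D i * xs i| := neg_le_abs _
          _ = |D i| * |xs i| := abs_mul _ _
      have h2 : |D i| * |xs i| = lam⁻¹ * ((lam * |D i|) * |xs i|) := by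
        rw [show lam⁻¹ * ((lam * |D i|) * |xs i|) = (lam⁻¹ * lam) * (|D i| * |xs i|) by ring,
          inv_mul_cancel₀ hlam0.ne', one_mul]
      have h3 : (lam * |D i|) * |xs i| ≤ M * |xs i| := by
        apply mul_le_mul_of_nonneg_right _ (abs_nonneg _)
        rw [← hζi]; exact hh
      calc -(D i * xs i) ≤ lam⁻¹ * ((lam * |D i|) * |xs i|) := by rw [← h2]; exact h1
        _ ≤ lam⁻¹ * (M * |xs i|) := by
            apply mul_le_mul_of_nonneg_left h3 (by positivity)
        _ = M * (lam⁻¹ * |xs i|) := by ring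
        _ ≤ M * (lam⁻¹ * |xs i| + |x i|) := by nlinarith [abs_nonneg (x i)]
    · rw [if_neg h0] at hζi
      by_cases h2 : B ≤ |x i| ∧ D i * x i < 0
      · -- ζ i = 0, term nonpositive
        obtain ⟨hBx, hDx⟩ := h2
        have hDxi : D i * x i = -(|D i| * |x i|) := by
          rw [← abs_mul]
          have := abs_of_neg hDx
          linarith
        have h3 : D i * (x i - xs i) ≤ 0 := by
          have : D i * (x i - xs i) = D i * x i - D i * xs i := by ring
          rw [this, hDxi]
          have h4 : D i * xs i ≥ -(|D i| * |xs i|) := by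
            rw [← abs_mul]; exact neg_abs_le _
          have h5 : |D i| * |xs i| ≤ |D i| * B :=
            mul_le_mul_of_nonneg_left (hxs i) (abs_nonneg _)
          have h6 : |D i| * B ≤ |D i| * |x i| :=
            mul_le_mul_of_nonneg_left hBx (abs_nonneg _)
          linarith
        calc D i * (x i - xs i) ≤ 0 := h3
          _ ≤ M * (lam⁻¹ * |xs i| + |x i|) := by positivity
      · rw [if_neg h2] at hζi
        have hDM : |D i| ≤ M := by rw [hζi, one_mul] at hh; exact hh
        calc D i * (x i - xs i) ≤ |D i * (x i - xs i)| := le_abs_self _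
          _ = |D i| * |x i - xs i| := abs_mul _ _
          _ ≤ |D i| * (|x i| + |xs i|) :=
              mul_le_mul_of_nonneg_left (abs_sub _ _) (abs_nonneg _)
          _ ≤ M * (|x i| + |xs i|) := by
              apply mul_le_mul_of_nonneg_right hDM (by positivity)
          _ ≤ M * (lam⁻¹ * |xs i| + |x i|) := by
              apply mul_le_mul_of_nonneg_left _ hMnn
              nlinarith [abs_nonneg (xs i)]
  have hkey : g ≤ M * (lam⁻¹ * Ss + S) := by
    calc g ≤ ∑ i, D i * (x i - xs i) := hgrad
      _ ≤ ∑ i, M * (lam⁻¹ * |xs i| + |x i|) := Finset.sum_le_sum hterm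
      _ = M * (lam⁻¹ * Ss + S) := by
          have hrw : ∀ i : Fin n, M * (lam⁻¹ * |xs i| + |x i|)
              = M * lam⁻¹ * |xs i| + M * |x i| := fun i => by ring
          simp_rw [hrw, Finset.sum_add_distrib, ← Finset.mul_sum, ← hS, ← hSs]
          ring
  -- M > 0
  have hMpos : 0 < M := by
    rcases hMnn.lt_or_eq with h | h
    · exact h
    · exfalso; rw [← h, zero_mul] at hkey; linarith
  have hζpos : 0 < ζ istar := by
    by_contra h
    push_neg at h
    have := (hζnn istar).antisymm h
    rw [hM, ← this, zero_mul] at hMpos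
    exact lt_irrefl _ hMpos
  by_cases hx0 : x istar = 0
  · -- ζ istar = lam, left disjunct
    left
    have hζl : ζ istar = lam := by rw [hζ istar, if_pos hx0]
    have hkey2 : g ≤ |D istar| * (Ss + lam * S) := by
      have : M * (lam⁻¹ * Ss + S) = |D istar| * (Ss + lam * S) := by
        rw [hM, hζl]
        field_simp
      rw [← this]; exact hkey
    have hdpos : 0 < Ss + lam * S := by
      rcases hden1.lt_or_eq with h | h
      · exact h
      · exfalso; rw [← h, mul_zero] at hkey2; linarith
    rw [ge_iff_le, div_le_iff₀ hdpos]
    linarith [hkey2]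
  · -- ζ istar = 1, right disjunct
    right
    refine ⟨hx0, ?_⟩
    have hζ1 : ζ istar = 1 := by
      rw [hζ istar, if_neg hx0]
      split_ifs with h
      · exfalso
        rw [hζ istar, if_neg hx0, if_pos h] at hζpos
        exact lt_irrefl _ hζpos
      · rfl
    have hkey2 : g ≤ |D istar| * (lam⁻¹ * Ss + S) := by
      rw [hM, hζ1, one_mul] at hkey; exact hkey
    have hdpos : 0 < lam⁻¹ * Ss + S := by
      rcases hden2.lt_or_eq with h | h
      · exact h
      · exfalso; rw [← h, mul_zero] at hkey2; linarith
    rw [ge_iff_le, div_le_iff₀ hdpos]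
    linarith [hkey2]
end

section
/- Let f : ℝ^n → ℝ_{>0} be twice continuously differentiable, convex, 2γ-second order robust and γ²-multiplicatively smooth with respect to the ℓ₁ norm. For any x ∈ ℝ^n, any coordinate i, and update x' = x - η ∇_i f(x) e_i with step size η = (1/2)min{1/(γ² f(x)), 1/(γ|∇_i f(x)|)}, the function value decreases by at least f(x) - f(x') ≥ min{ (∇_i f(x))² / (4γ² f(x)), |∇_i f(x)|/(4γ) } ≥ 0. -/
/-
Along the segment from `x` to `x' = x + y`, `y = -ηD eᵢ`, the point stays within ℓ₁-distance
`η|D| ≤ 1/(2γ)` of `x`, so robustness and multiplicative smoothness bound the second directional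
derivative by `2γ² f(x) (η|D|)²`. The second-order Taylor bound then gives
`f(x') ≤ f(x) - ηD² + γ² f(x) η² D² ≤ f(x) - ηD²/2`, using `γ² f(x) η ≤ 1/2`,
and `ηD²/2` is exactly the claimed minimum.
-/

open Set

theorem image_le_of_deriv2_le {φ φ' φ'' : ℝ → ℝ} {a b M : ℝ} (hab : a ≤ b)
    (hφ : ∀ t ∈ Icc a b, HasDerivAt φ (φ' t) t) (hφ' : ∀ t ∈ Icc a b, HasDerivAt φ' (φ'' t) t)
    (hM : ∀ t ∈ Ico a b, φ'' t ≤ M) :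
    φ b ≤ φ a + φ' a * (b - a) + M * (b - a) ^ 2 / 2 := by
  have hderiv_le : ∀ t ∈ Icc a b, φ' t ≤ φ' a + M * (t - a) := by
    refine image_le_of_deriv_right_le_deriv_boundary
      (B := fun t => φ' a + M * (t - a)) (B' := fun _ => M)
      (fun t ht => (hφ' t ht).continuousAt.continuousWithinAt)
      (fun t ht => (hφ' t (Ico_subset_Icc_self ht)).hasDerivWithinAt) (by simp)
      (by fun_prop) (fun t _ => ?_) hM
    have hB : HasDerivAt (fun s => φ' a + M * (s - a)) M t := by
      simpa using ((hasDerivAt_id' t).sub_const a).const_mul M |>.const_add (φ' a)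
    exact hB.hasDerivWithinAt
  refine image_le_of_deriv_right_le_deriv_boundary
    (B := fun t => φ a + φ' a * (t - a) + M * (t - a) ^ 2 / 2)
    (B' := fun t => φ' a + M * (t - a))
    (fun t ht => (hφ t ht).continuousAt.continuousWithinAt)
    (fun t ht => (hφ t (Ico_subset_Icc_self ht)).hasDerivWithinAt) (by simp)
    (by fun_prop) (fun t _ => ?_) (fun t ht => hderiv_le t (Ico_subset_Icc_self ht))
    (right_mem_Icc.mpr hab)
  have hshift := (hasDerivAt_id' t).sub_const a
  have hB : HasDerivAt (fun s => φ a + φ' a * (s - a) + M * (s - a) ^ 2 / 2)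
      (φ' a + M * (t - a)) t := by
    refine (((hshift.const_mul (φ' a)).const_add (φ a)).add
      ((hshift.fun_pow 2).const_mul M |>.div_const 2)).congr_deriv ?_
    push_cast
    ring
  exact hB.hasDerivWithinAt

theorem hasDerivAt_comp_add_smul {E F : Type*} [NormedAddCommGroup E] [NormedSpace ℝ E]
    [NormedAddCommGroup F] [NormedSpace ℝ F] {g : E → F} {x y : E} {t : ℝ}
    (hg : DifferentiableAt ℝ g (x + t • y)) :
    HasDerivAt (fun s : ℝ => g (x + s • y)) (fderiv ℝ g (x + t • y) y) t := by
  have hline : HasDerivAt (fun s : ℝ => x + s • y) y t := by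
    simpa using ((hasDerivAt_id t).smul_const y).const_add x
  exact hg.hasFDerivAt.comp_hasDerivAt t hline

theorem ContDiff.le_add_fderiv_add_of_deriv2_le {E : Type*} [NormedAddCommGroup E]
    [NormedSpace ℝ E] {f : E → ℝ} (hf : ContDiff ℝ 2 f) (x y : E) {M : ℝ}
    (hM : ∀ t ∈ Icc (0 : ℝ) 1, fderiv ℝ (fun u => fderiv ℝ f u y) (x + t • y) y ≤ M) :
    f (x + y) ≤ f x + fderiv ℝ f x y + M / 2 := by
  have hdf : Differentiable ℝ (fun u => fderiv ℝ f u y) :=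
    ((hf.fderiv_right (m := 1) le_rfl).differentiable one_ne_zero).clm_apply
      (differentiable_const y)
  have := image_le_of_deriv2_le zero_le_one
    (fun t _ => hasDerivAt_comp_add_smul ((hf.differentiable two_ne_zero) _))
    (fun t _ => hasDerivAt_comp_add_smul (hdf _)) (fun t ht => hM t (Ico_subset_Icc_self ht))
  simpa using this

theorem sum_abs_smul_single {ι : Type*} [Fintype ι] [DecidableEq ι] (i : ι) (c : ℝ) :
    ∑ j, |(c • Pi.single i 1 : ι → ℝ) j| = |c| := by
  simp [Pi.single_apply, apply_ite (|·|)]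

theorem sum_abs_add_smul_sub_le {ι : Type*} [Fintype ι] (x y : ι → ℝ) {t : ℝ}
    (ht : t ∈ Icc (0 : ℝ) 1) : ∑ j, |(x + t • y) j - x j| ≤ ∑ j, |y j| := by
  simp only [Pi.add_apply, Pi.smul_apply, smul_eq_mul, add_sub_cancel_left, abs_mul,
    abs_of_nonneg ht.1, ← Finset.mul_sum]
  exact mul_le_of_le_one_left (by positivity) ht.2

theorem mul_half_min_one_div_le {a b : ℝ} (ha : 0 ≤ a) :
    a * ((1 / 2) * min (1 / a) b) ≤ 1 / 2 :=
  calc a * ((1 / 2) * min (1 / a) b) ≤ a * ((1 / 2) * (1 / a)) :=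
        mul_le_mul_of_nonneg_left (mul_le_mul_of_nonneg_left (min_le_left _ _) (by norm_num)) ha
    _ = 1 / 2 * (a / a) := by ring
    _ ≤ 1 / 2 := mul_le_of_le_one_right (by norm_num) (div_self_le_one a)

theorem half_min_mul_sq_div_two {γ F D : ℝ} :
    (1 / 2) * min (1 / (γ ^ 2 * F)) (1 / (γ * |D|)) * D ^ 2 / 2 =
      min (D ^ 2 / (4 * γ ^ 2 * F)) (|D| / (4 * γ)) := by
  rw [show ∀ m : ℝ, 1 / 2 * m * D ^ 2 / 2 = m * (D ^ 2 / 4) by intro m; ring,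
    min_mul_of_nonneg _ _ (by positivity)]
  congr 1
  · ring
  · rcases eq_or_ne D 0 with rfl | hD
    · simp
    · rw [← sq_abs]
      field_simp

theorem coordinate_update_progress_general
    {n : ℕ} (f : (Fin n → ℝ) → ℝ) (γ : ℝ) (hγ : 0 < γ)
    (hf : ContDiff ℝ 2 f) (hpos : ∀ x, 0 < f x)
    (Q : (Fin n → ℝ) → (Fin n → ℝ) → ℝ)
    (hQ : ∀ z y, Q z y = fderiv ℝ (fun u => fderiv ℝ f u y) z y)
    -- 2γ-second order robustness w.r.t. ℓ₁
    (hrob : ∀ a b y, (∑ i, |b i - a i|) ≤ 1 / (2 * γ) →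
      (1 / 2) * Q a y ≤ Q b y ∧ Q b y ≤ 2 * Q a y)
    -- γ²-multiplicative smoothness w.r.t. ℓ₁
    (hms : ∀ z y, Q z y ≤ γ ^ 2 * f z * (∑ i, |y i|) ^ 2)
    (x : Fin n → ℝ) (i : Fin n)
    (D : ℝ) (hD : D = fderiv ℝ f x (Pi.single i 1))
    (η : ℝ) (hη : η = (1 / 2) * min (1 / (γ ^ 2 * f x)) (1 / (γ * |D|)))
    (x' : Fin n → ℝ) (hx' : x' = x - (η * D) • (Pi.single i 1 : Fin n → ℝ)) :
    f x - f x' ≥ min (D ^ 2 / (4 * γ ^ 2 * f x)) (|D| / (4 * γ)) ∧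
      0 ≤ min (D ^ 2 / (4 * γ ^ 2 * f x)) (|D| / (4 * γ)) := by
  have hfx := hpos x
  have hη₀ : 0 ≤ η := hη ▸ by positivity
  have hηf : γ ^ 2 * f x * η ≤ 1 / 2 := hη ▸ mul_half_min_one_div_le (by positivity)
  have hηD : γ * |D| * η ≤ 1 / 2 := hη ▸ min_comm (α := ℝ) _ _ ▸
    mul_half_min_one_div_le (by positivity)
  rw [← half_min_mul_sq_div_two, ← hη]
  refine ⟨?_, by positivity⟩
  set y : Fin n → ℝ := (-(η * D)) • Pi.single i 1
  have hy : ∑ j, |y j| = η * |D| := by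
    rw [sum_abs_smul_single, abs_neg, abs_mul, abs_of_nonneg hη₀]
  have hyγ : ∑ j, |y j| ≤ 1 / (2 * γ) := by rw [hy, le_div_iff₀ (by positivity)]; linarith
  have hQ_le : ∀ t ∈ Icc (0 : ℝ) 1, Q (x + t • y) y ≤ 2 * (γ ^ 2 * f x * (η * |D|) ^ 2) :=
    fun t ht => (hrob x _ y ((sum_abs_add_smul_sub_le x y ht).trans hyγ)).2.trans
      (by linarith [hy ▸ hms x y])
  have htaylor := hf.le_add_fderiv_add_of_deriv2_le x y fun t ht => hQ (x + t • y) y ▸ hQ_le t ht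
  have hlin : fderiv ℝ f x y = -(η * D) * D := by rw [map_smul, smul_eq_mul, ← hD]
  have hsecond : γ ^ 2 * f x * (η * |D|) ^ 2 ≤ η * D ^ 2 / 2 := by
    rw [mul_pow, sq_abs]
    nlinarith [mul_le_mul_of_nonneg_right hηf (by positivity : 0 ≤ η * D ^ 2)]
  rw [show x' = x + y by rw [hx', sub_eq_add_neg, ← neg_smul]]
  linarith

/-- Coordinate update progress for a positive, convex, twice continuously
differentiable function that is 2γ-second order robust and γ²-multiplicatively
smooth with respect to the ℓ₁ norm. -/
theorem coordinate_update_progress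
    {n : ℕ} (f : (Fin n → ℝ) → ℝ) (γ : ℝ) (hγ : 0 < γ)
    (hf : ContDiff ℝ 2 f) (hpos : ∀ x, 0 < f x) (hconv : ConvexOn ℝ Set.univ f)
    (Q : (Fin n → ℝ) → (Fin n → ℝ) → ℝ)
    (hQ : ∀ z y, Q z y = fderiv ℝ (fun u => fderiv ℝ f u y) z y)
    -- 2γ-second order robustness w.r.t. ℓ₁
    (hrob : ∀ a b y, (∑ i, |b i - a i|) ≤ 1 / (2 * γ) →
      (1 / 2) * Q a y ≤ Q b y ∧ Q b y ≤ 2 * Q a y)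
    -- γ²-multiplicative smoothness w.r.t. ℓ₁
    (hms : ∀ z y, Q z y ≤ γ ^ 2 * f z * (∑ i, |y i|) ^ 2)
    (x : Fin n → ℝ) (i : Fin n)
    (D : ℝ) (hD : D = fderiv ℝ f x (Pi.single i 1))
    (η : ℝ) (hη : η = (1 / 2) * min (1 / (γ ^ 2 * f x)) (1 / (γ * |D|)))
    (x' : Fin n → ℝ) (hx' : x' = x - (η * D) • (Pi.single i 1 : Fin n → ℝ)) :
    f x - f x' ≥ min (D ^ 2 / (4 * γ ^ 2 * f x)) (|D| / (4 * γ)) ∧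
      0 ≤ min (D ^ 2 / (4 * γ ^ 2 * f x)) (|D| / (4 * γ)) :=
  coordinate_update_progress_general f γ hγ hf hpos Q hQ hrob hms x i D hD η hη x' hx'
end

section
/- Let f : ℝ^n → ℝ_{>0} be twice continuously differentiable, convex, γ-second order robust and μ-multiplicatively smooth with respect to a norm ‖·‖. Let g achieve the minimum of -⟨∇f(x), g⟩ + (1/2)‖g‖², and set x' = x - η g with 0 < η ≤ min{1/(2μ f(x)), 1/(γ‖∇f(x)‖)}. Then f(x) - f(x') ≥ (η/2)‖g‖². -/
/-!
Along the segment put `φ t = f (x - t η g)` and `D t = η ∂_g f (x - t η g)`, so that `φ' = -D`.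
Maximality of `g` gives `∂_g f x = N(g)²` (differentiate `s ↦ s ⟪∇f x, g⟫ - s² N(g)² / 2` at
`s = 1`), so `D 0 = η N(g)²`. Multiplicative smoothness bounds `D' ≥ -c φ` with `c = η² μ N(g)²`,
and the step size gives `c φ 0 ≤ D 0 / 2`. By continuous induction `D` stays above `D 0 / 2` on
`[0, 1)`: as long as it does, `φ` decreases, hence `D t ≥ D 0 - c φ 0 t > D 0 / 2`. Integrating
`φ' = -D ≤ -D 0 / 2` over `[0, 1]` gives the claim.
-/

open Set

section Segment

variable {f f' : ℝ → ℝ} {a b : ℝ}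

theorem antitoneOn_Icc_of_hasDerivAt (hf : ∀ t, HasDerivAt f (f' t) t)
    (hf' : ∀ t ∈ Ioo a b, f' t ≤ 0) : AntitoneOn f (Icc a b) :=
  antitoneOn_of_hasDerivWithinAt_nonpos (convex_Icc a b)
    (fun t _ => (hf t).continuousAt.continuousWithinAt)
    (fun t _ => (hf t).hasDerivWithinAt) (by rwa [interior_Icc])

theorem monotoneOn_Icc_of_hasDerivAt (hf : ∀ t, HasDerivAt f (f' t) t)
    (hf' : ∀ t ∈ Ioo a b, 0 ≤ f' t) : MonotoneOn f (Icc a b) :=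
  monotoneOn_of_hasDerivWithinAt_nonneg (convex_Icc a b)
    (fun t _ => (hf t).continuousAt.continuousWithinAt)
    (fun t _ => (hf t).hasDerivWithinAt) (by rwa [interior_Icc])

theorem ContinuousOn.exists_first_le {k : ℝ} (hf : ContinuousOn f (Icc a b)) (ha : k < f a)
    (hb : f b ≤ k) (hab : a ≤ b) :
    ∃ τ ∈ Ioc a b, f τ ≤ k ∧ ∀ s ∈ Ico a τ, k < f s := by
  have hcpt : IsCompact (Icc a b ∩ f ⁻¹' Iic k) :=
    isCompact_Icc.of_isClosed_subset
      (hf.preimage_isClosed_of_isClosed isClosed_Icc isClosed_Iic) inter_subset_left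
  obtain ⟨τ, ⟨⟨haτ, hτb⟩, hτ⟩, hleast⟩ := hcpt.exists_isLeast ⟨b, ⟨hab, le_rfl⟩, hb⟩
  refine ⟨τ, ⟨haτ.lt_of_ne ?_, hτb⟩, hτ, fun s ⟨has, hsτ⟩ => ?_⟩
  · rintro rfl
    exact lt_irrefl _ (ha.trans_le hτ)
  · by_contra! hs
    exact hsτ.not_ge (hleast ⟨⟨has, hsτ.le.trans hτb⟩, hs⟩)

end Segment

section SecondOrderBound

variable {φ D D' : ℝ → ℝ} {c : ℝ}

theorem sub_mul_le_of_le_apply_zero (hD : ∀ t, HasDerivAt D (D' t) t)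
    (hD' : ∀ t, -(c * φ t) ≤ D' t) (hc : 0 ≤ c) {τ : ℝ} (hτ : 0 ≤ τ)
    (hφτ : ∀ s ∈ Ioo 0 τ, φ s ≤ φ 0) : D 0 - c * φ 0 * τ ≤ D τ := by
  have hmono : MonotoneOn (fun s => D s + c * φ 0 * s) (Icc 0 τ) :=
    monotoneOn_Icc_of_hasDerivAt (fun t => (hD t).add ((hasDerivAt_id t).const_mul _))
      fun s hs => by nlinarith [hD' s, mul_le_mul_of_nonneg_left (hφτ s hs) hc]
  simpa using hmono (left_mem_Icc.2 hτ) (right_mem_Icc.2 hτ) hτ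

theorem half_lt_of_mem_Ico (hφ : ∀ t, HasDerivAt φ (-D t) t)
    (hD : ∀ t, HasDerivAt D (D' t) t) (hD' : ∀ t, -(c * φ t) ≤ D' t) (hc : 0 ≤ c)
    (hD0 : 0 < D 0) (hstep : c * φ 0 ≤ D 0 / 2) :
    ∀ t ∈ Ico (0 : ℝ) 1, D 0 / 2 < D t := by
  by_contra! ⟨t, ⟨ht0, ht1⟩, ht⟩
  obtain ⟨τ, ⟨hτ0, hτt⟩, hτ, hbefore⟩ :=
    ContinuousOn.exists_first_le (fun s _ => (hD s).continuousAt.continuousWithinAt)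
      (half_lt_self hD0) ht ht0
  have hφτ : ∀ s ∈ Ioo 0 τ, φ s ≤ φ 0 := fun s hs =>
    antitoneOn_Icc_of_hasDerivAt hφ
      (fun u hu => by linarith [hbefore u ⟨hu.1.le, hu.2⟩]) (left_mem_Icc.2 hτ0.le)
      (Ioo_subset_Icc_self hs) hs.1.le
  have hDτ := sub_mul_le_of_le_apply_zero hD hD' hc hτ0.le hφτ
  nlinarith

theorem apply_one_add_half_le (hφ : ∀ t, HasDerivAt φ (-D t) t)
    (hD : ∀ t, HasDerivAt D (D' t) t) (hD' : ∀ t, -(c * φ t) ≤ D' t) (hc : 0 ≤ c)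
    (hD0 : 0 < D 0) (hstep : c * φ 0 ≤ D 0 / 2) :
    φ 1 + D 0 / 2 ≤ φ 0 := by
  have hanti : AntitoneOn (fun s => φ s + D 0 / 2 * s) (Icc 0 1) :=
    antitoneOn_Icc_of_hasDerivAt (fun t => (hφ t).add ((hasDerivAt_id t).const_mul _))
      fun s hs => by
        linarith [half_lt_of_mem_Ico hφ hD hD' hc hD0 hstep s (Ioo_subset_Ico_self hs)]
  simpa using hanti (left_mem_Icc.2 zero_le_one) (right_mem_Icc.2 zero_le_one) zero_le_one

end SecondOrderBound

theorem LinearMap.apply_eq_sq_of_forall_le {E : Type*} [AddCommGroup E] [Module ℝ E]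
    (ℓ : E →ₗ[ℝ] ℝ) {N : E → ℝ} (hN : ∀ (c : ℝ) y, N (c • y) = |c| * N y) {g : E}
    (hg : ∀ y, ℓ y - 1 / 2 * N y ^ 2 ≤ ℓ g - 1 / 2 * N g ^ 2) : ℓ g = N g ^ 2 := by
  have hmax : IsMaxOn (fun t : ℝ => t * ℓ g - 1 / 2 * N g ^ 2 * t ^ 2) univ 1 :=
    isMaxOn_univ_iff.2 fun t => by
      have h := hg (t • g)
      rw [map_smul, hN, smul_eq_mul, mul_pow, sq_abs] at h
      linarith
  have hderiv : HasDerivAt (fun t : ℝ => t * ℓ g - 1 / 2 * N g ^ 2 * t ^ 2)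
      (ℓ g - N g ^ 2) 1 :=
    (((hasDerivAt_id' (1 : ℝ)).mul_const (ℓ g)).sub
      ((hasDerivAt_pow 2 (1 : ℝ)).const_mul (1 / 2 * N g ^ 2))).congr_deriv (by ring)
  linarith [(hmax.isLocalMax Filter.univ_mem).hasDerivAt_eq_zero hderiv]

theorem hasDerivAt_comp_sub_smul {E F : Type*} [NormedAddCommGroup E] [NormedSpace ℝ E]
    [NormedAddCommGroup F] [NormedSpace ℝ F] {h : E → F} {x v : E} {t : ℝ}
    (hh : DifferentiableAt ℝ h (x - t • v)) :
    HasDerivAt (fun s : ℝ => h (x - s • v)) (-fderiv ℝ h (x - t • v) v) t := by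
  simpa [Function.comp_def] using
    hh.hasFDerivAt.comp_hasDerivAt t (((hasDerivAt_id t).smul_const v).const_sub x)

theorem steepest_descent_progress_general
    {n : ℕ} (f : EuclideanSpace ℝ (Fin n) → ℝ) (γ μ : ℝ) (hμ : 0 < μ)
    (hf : ContDiff ℝ 2 f) (hpos : ∀ y, 0 < f y)
    (N : EuclideanSpace ℝ (Fin n) → ℝ)
    (hNdef : ∀ y, N y = 0 → y = 0)
    (hNhom : ∀ (c : ℝ) y, N (c • y) = |c| * N y)
    (Q : EuclideanSpace ℝ (Fin n) → EuclideanSpace ℝ (Fin n) → ℝ)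
    (hQ : ∀ z y, Q z y = fderiv ℝ (fun u => fderiv ℝ f u y) z y)
    -- μ-multiplicative smoothness w.r.t. N
    (hms : ∀ z y, Q z y ≤ μ * f z * (N y) ^ 2)
    (x gradfx : EuclideanSpace ℝ (Fin n)) (hgrad : HasGradientAt f gradfx x)
    (g : EuclideanSpace ℝ (Fin n))
    (hminimizer : ∀ y, inner ℝ gradfx g - (1 / 2) * (N g) ^ 2 ≥
      (inner ℝ gradfx y : ℝ) - (1 / 2) * (N y) ^ 2)
    (η : ℝ) (hη0 : 0 < η)
    (hη : η ≤ min (1 / (2 * μ * f x)) (1 / (γ * N gradfx))) :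
    f x - f (x - η • g) ≥ (η / 2) * (N g) ^ 2 := by
  rcases eq_or_ne (N g) 0 with hg | hg
  · obtain rfl := hNdef g hg
    simp [hg]
  have hfx_g : fderiv ℝ f x g = N g ^ 2 := by
    rw [hgrad.hasFDerivAt.fderiv, InnerProductSpace.toDual_apply_apply]
    exact (innerₗ _ gradfx).apply_eq_sq_of_forall_le hNhom hminimizer
  have hstep : η * (μ * f x) ≤ 1 / 2 := by
    have := (le_div_iff₀ (by have := hpos x; positivity)).1 (hη.trans (min_le_left _ _))
    linarith
  have hf₁ : Differentiable ℝ f := hf.differentiable (by norm_num)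
  have hf₂ : Differentiable ℝ fun u => fderiv ℝ f u g :=
    ((hf.fderiv_right le_rfl).differentiable one_ne_zero).clm_apply (differentiable_const g)
  have key := apply_one_add_half_le (φ := fun t => f (x - t • η • g))
    (D := fun t => η * fderiv ℝ f (x - t • η • g) g)
    (D' := fun t => -(η * (η * Q (x - t • η • g) g))) (c := η ^ 2 * μ * N g ^ 2)
    (fun t => by simpa using hasDerivAt_comp_sub_smul (x := x) (v := η • g) (hf₁ _) (t := t))
    (fun t => by
      simpa [hQ] using
        (hasDerivAt_comp_sub_smul (x := x) (v := η • g) (hf₂ _) (t := t)).const_mul η)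
    (fun t => by nlinarith [hms (x - t • η • g) g])
    (by positivity) (by simp only [zero_smul, sub_zero, hfx_g]; positivity)
    (by
      simp only [zero_smul, sub_zero, hfx_g]
      nlinarith [mul_le_mul_of_nonneg_right hstep (by positivity : 0 ≤ η * N g ^ 2)])
  simp only [one_smul, zero_smul, sub_zero, hfx_g] at key
  linarith

/-- Progress of the steepest-descent update with respect to an arbitrary norm N,
for a positive, convex, C² function that is γ-second order robust and
μ-multiplicatively smooth w.r.t. N: f(x) - f(x - ηg) ≥ (η/2) N(g)². -/
theorem steepest_descent_progress
    {n : ℕ} (f : EuclideanSpace ℝ (Fin n) → ℝ) (γ μ : ℝ) (hγ : 0 < γ) (hμ : 0 < μ)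
    (hf : ContDiff ℝ 2 f) (hpos : ∀ y, 0 < f y) (hconv : ConvexOn ℝ Set.univ f)
    (N : EuclideanSpace ℝ (Fin n) → ℝ)
    (hN0 : ∀ y, 0 ≤ N y) (hNdef : ∀ y, N y = 0 → y = 0)
    (hNhom : ∀ (c : ℝ) y, N (c • y) = |c| * N y)
    (hNtri : ∀ y z, N (y + z) ≤ N y + N z)
    (Q : EuclideanSpace ℝ (Fin n) → EuclideanSpace ℝ (Fin n) → ℝ)
    (hQ : ∀ z y, Q z y = fderiv ℝ (fun u => fderiv ℝ f u y) z y)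
    -- γ-second order robustness w.r.t. N
    (hrob : ∀ a b y, N (b - a) ≤ 1 / γ →
      (1 / 2) * Q a y ≤ Q b y ∧ Q b y ≤ 2 * Q a y)
    -- μ-multiplicative smoothness w.r.t. N
    (hms : ∀ z y, Q z y ≤ μ * f z * (N y) ^ 2)
    (x gradfx : EuclideanSpace ℝ (Fin n)) (hgrad : HasGradientAt f gradfx x)
    (g : EuclideanSpace ℝ (Fin n))
    (hminimizer : ∀ y, inner ℝ gradfx g - (1 / 2) * (N g) ^ 2 ≥
      (inner ℝ gradfx y : ℝ) - (1 / 2) * (N y) ^ 2)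
    (η : ℝ) (hη0 : 0 < η)
    (hη : η ≤ min (1 / (2 * μ * f x)) (1 / (γ * N gradfx))) :
    f x - f (x - η • g) ≥ (η / 2) * (N g) ^ 2 :=
  steepest_descent_progress_general f γ μ hμ hf hpos N hNdef hNhom Q hQ hms x gradfx hgrad g
    hminimizer η hη0 hη
end
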